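/- If f is monotone under relative submajorization of pairs of families and f(c·ρ, σ) = f(ρ,σ) whenever c ∈ C(X,ℝ_{>0}) satisfies c(x)=1 for a fixed x (as holds for spectrum elements), then f(ρ,σ) depends on ρ only through ρ(x): for any ρ, ρ' : X → PD(H) with ρ(x) = ρ'(x), f(ρ,σ) = f(ρ',σ). -/

import Mathlib

/-!
If `ρ x = ρ' x`, the function `c x' = max_{‖v‖ = 1} ⟪v, ρ' x' v⟫ / ⟪v, ρ x' v⟫` is continuous (the
unit sphere is compact), positive, equal to `1` at `x`, and satisfies `ρ' ≤ c • ρ` in the Loewner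
order. Monotonicity along the identity channel and invariance under such scalings give
`f ρ' σ ≤ f (c • ρ) σ = f ρ σ`; exchanging `ρ` and `ρ'` gives equality.
-/

open Matrix Kronecker ComplexOrder

variable {n m : Type*}

/-- Loewner order: `loewner A B` means `A ≤ B`. -/
def loewner [Fintype n] (A B : Matrix n n ℂ) : Prop := (B - A).PosSemidef

/-- The map `Φ ⊗ id_k` on block matrices. -/
def blockMap [Fintype n] [Fintype m] (Φ : Matrix n n ℂ →ₗ[ℂ] Matrix m m ℂ) (k : ℕ)
    (A : Matrix (n × Fin k) (n × Fin k) ℂ) : Matrix (m × Fin k) (m × Fin k) ℂ :=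
  Matrix.of fun p q => Φ (Matrix.of fun a b => A (a, p.2) (b, q.2)) p.1 q.1

/-- Complete positivity of a linear map between matrix algebras. -/
def IsCP [Fintype n] [Fintype m] (Φ : Matrix n n ℂ →ₗ[ℂ] Matrix m m ℂ) : Prop :=
  ∀ (k : ℕ) (A : Matrix (n × Fin k) (n × Fin k) ℂ), A.PosSemidef → (blockMap Φ k A).PosSemidef

/-- Trace nonincreasing on positive semidefinite operators. -/
def IsTNI [Fintype n] [Fintype m] (Φ : Matrix n n ℂ →ₗ[ℂ] Matrix m m ℂ) : Prop :=
  ∀ A : Matrix n n ℂ, A.PosSemidef → ((Φ A).trace).re ≤ (A.trace).re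

section

variable [Fintype n]

namespace Matrix

lemma re_star_smul_dotProduct_mulVec_smul (M : Matrix n n ℂ) (a : ℂ) (v : n → ℂ) :
    (star (a • v) ⬝ᵥ M *ᵥ (a • v)).re = ‖a‖ ^ 2 * (star v ⬝ᵥ M *ᵥ v).re := by
  simp only [star_smul, RCLike.star_def, mulVec_smul, dotProduct_smul, smul_dotProduct,
    smul_eq_mul, Complex.mul_re, Complex.conj_re, Complex.conj_im, Complex.mul_im,
    Complex.sq_norm, Complex.normSq_apply]
  ring

lemma PosDef.re_dotProduct_mulVec_pos {A : Matrix n n ℂ} (hA : A.PosDef) {v : n → ℂ}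
    (hv : v ≠ 0) : 0 < (star v ⬝ᵥ A *ᵥ v).re :=
  (Complex.pos_iff.mp (hA.dotProduct_mulVec_pos hv)).1

lemma PosSemidef.of_re_dotProduct_mulVec_sphere_nonneg {M : Matrix n n ℂ} (hM : M.IsHermitian)
    (h : ∀ v ∈ Metric.sphere (0 : n → ℂ) 1, 0 ≤ (star v ⬝ᵥ M *ᵥ v).re) : M.PosSemidef := by
  refine .of_dotProduct_mulVec_nonneg hM fun v => Complex.nonneg_iff.mpr
    ⟨?_, (hM.im_star_dotProduct_mulVec_self v).symm⟩
  rcases eq_or_ne v 0 with rfl | hv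
  · simp
  have hsphere : ((‖v‖⁻¹ : ℝ) : ℂ) • v ∈ Metric.sphere (0 : n → ℂ) 1 := by
    simp [norm_smul, hv]
  have hscaled := h _ hsphere
  rw [re_star_smul_dotProduct_mulVec_smul] at hscaled
  exact nonneg_of_mul_nonneg_right hscaled (by simp [hv])

noncomputable def rayleighQuotient (A B : Matrix n n ℂ) (v : n → ℂ) : ℝ :=
  (star v ⬝ᵥ B *ᵥ v).re / (star v ⬝ᵥ A *ᵥ v).re

lemma continuous_rayleighQuotient {Z : Type*} [TopologicalSpace Z] {A B : Z → Matrix n n ℂ}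
    {v : Z → n → ℂ} (hA : Continuous A) (hB : Continuous B) (hv : Continuous v)
    (hApos : ∀ z, (A z).PosDef) (hv0 : ∀ z, v z ≠ 0) :
    Continuous fun z => rayleighQuotient (A z) (B z) (v z) := by
  have hquad : ∀ {M : Z → Matrix n n ℂ}, Continuous M →
      Continuous fun z => (star (v z) ⬝ᵥ M z *ᵥ v z).re :=
    fun hM => Complex.continuous_re.comp (hv.star.dotProduct (hM.matrix_mulVec hv))
  exact (hquad hB).div (hquad hA) fun z => ((hApos z).re_dotProduct_mulVec_pos (hv0 z)).ne'

/-- The paper's `c₁`: the least `t` with `B ≤ t • A`, for positive definite `A`. -/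
noncomputable def loewnerScale (A B : Matrix n n ℂ) : ℝ :=
  ⨆ v : Metric.sphere (0 : n → ℂ) 1, rayleighQuotient A B v

lemma continuous_loewnerScale {X : Type*} [TopologicalSpace X] {ρ ρ' : X → Matrix n n ℂ}
    (hρc : Continuous ρ) (hρ'c : Continuous ρ') (hρ : ∀ x, (ρ x).PosDef) :
    Continuous fun x => loewnerScale (ρ x) (ρ' x) := by
  have hratio : Continuous fun p : X × Metric.sphere (0 : n → ℂ) 1 =>
      rayleighQuotient (ρ p.1) (ρ' p.1) p.2 :=
    continuous_rayleighQuotient (by fun_prop) (by fun_prop) (by fun_prop) (fun p => hρ p.1)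
      fun p => ne_zero_of_mem_sphere one_ne_zero p.2
  simpa only [loewnerScale, Set.image_univ, sSup_range] using isCompact_univ.continuous_sSup hratio

lemma bddAbove_range_rayleighQuotient_sphere {A : Matrix n n ℂ} (hA : A.PosDef)
    (B : Matrix n n ℂ) :
    BddAbove (Set.range fun v : Metric.sphere (0 : n → ℂ) 1 => rayleighQuotient A B v) :=
  (isCompact_range (continuous_rayleighQuotient continuous_const continuous_const
    continuous_subtype_val (fun _ => hA) (ne_zero_of_mem_sphere one_ne_zero))).bddAbove

lemma rayleighQuotient_le_loewnerScale {A : Matrix n n ℂ} (hA : A.PosDef) (B : Matrix n n ℂ)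
    {v : n → ℂ} (hv : v ∈ Metric.sphere (0 : n → ℂ) 1) :
    rayleighQuotient A B v ≤ loewnerScale A B :=
  le_ciSup (bddAbove_range_rayleighQuotient_sphere hA B) ⟨v, hv⟩

lemma nonempty_sphere_zero_one [Nonempty n] : (Metric.sphere (0 : n → ℂ) 1).Nonempty :=
  NormedSpace.sphere_nonempty.mpr zero_le_one

lemma loewnerScale_pos [Nonempty n] {A B : Matrix n n ℂ} (hA : A.PosDef) (hB : B.PosDef) :
    0 < loewnerScale A B := by
  obtain ⟨v, hv⟩ := nonempty_sphere_zero_one (n := n)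
  have hv0 := ne_zero_of_mem_sphere one_ne_zero ⟨v, hv⟩
  exact (div_pos (hB.re_dotProduct_mulVec_pos hv0) (hA.re_dotProduct_mulVec_pos hv0)).trans_le
    (rayleighQuotient_le_loewnerScale hA B hv)

lemma loewnerScale_self [Nonempty n] {A : Matrix n n ℂ} (hA : A.PosDef) :
    loewnerScale A A = 1 := by
  have hratio : ∀ v : Metric.sphere (0 : n → ℂ) 1, rayleighQuotient A A v = 1 :=
    fun v => div_self (hA.re_dotProduct_mulVec_pos (ne_zero_of_mem_sphere one_ne_zero v)).ne'
  have := (nonempty_sphere_zero_one (n := n)).to_subtype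
  simp only [loewnerScale, hratio, ciSup_const]

lemma loewner_loewnerScale_smul {A B : Matrix n n ℂ} (hA : A.PosDef) (hB : B.IsHermitian) :
    loewner B ((loewnerScale A B : ℂ) • A) := by
  refine PosSemidef.of_re_dotProduct_mulVec_sphere_nonneg ?_ fun v hv => ?_
  · exact (hA.isHermitian.smul (Complex.conj_ofReal _)).sub hB
  have hle := rayleighQuotient_le_loewnerScale hA B hv
  rw [rayleighQuotient,
    div_le_iff₀ (hA.re_dotProduct_mulVec_pos (ne_zero_of_mem_sphere one_ne_zero ⟨v, hv⟩))] at hle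
  simpa [sub_mulVec, smul_mulVec, dotProduct_sub] using hle

end Matrix

lemma isCP_id : IsCP (LinearMap.id : Matrix n n ℂ →ₗ[ℂ] Matrix n n ℂ) := by
  intro k A hA
  have : blockMap LinearMap.id k A = A := by
    ext p q
    simp [blockMap]
  rwa [this]

lemma isTNI_id : IsTNI (LinearMap.id : Matrix n n ℂ →ₗ[ℂ] Matrix n n ℂ) :=
  fun _ _ => le_rfl

lemma loewner_refl (A : Matrix n n ℂ) : loewner A A := by
  simpa [loewner] using PosSemidef.zero

lemma exists_continuous_scale_loewner {X : Type*} [TopologicalSpace X] {ρ ρ' : X → Matrix n n ℂ}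
    (hρc : Continuous ρ) (hρ'c : Continuous ρ') (hρ : ∀ x', (ρ x').PosDef)
    (hρ' : ∀ x', (ρ' x').PosDef) {x : X} (hpt : ρ x = ρ' x) :
    ∃ c : X → ℝ, Continuous c ∧ (∀ x', 0 < c x') ∧ c x = 1 ∧
      ∀ x', loewner (ρ' x') ((c x' : ℂ) • ρ x') := by
  rcases isEmpty_or_nonempty n with hn | hn
  · exact ⟨1, continuous_const, fun _ => one_pos, rfl,
      fun x' => by rw [loewner, Subsingleton.elim (_ - ρ' x') 0]; exact PosSemidef.zero⟩
  refine ⟨fun x' => loewnerScale (ρ x') (ρ' x'), continuous_loewnerScale hρc hρ'c hρ,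
    fun x' => loewnerScale_pos (hρ x') (hρ' x'), ?_,
    fun x' => loewner_loewnerScale_smul (hρ x') (hρ' x').isHermitian⟩
  simp only [← hpt, loewnerScale_self (hρ x)]

end

theorem spectrum_element_single_point_dependence_general
    {X Y : Type*} [TopologicalSpace X] [TopologicalSpace Y]
    [Fintype n]
    (f : (X → Matrix n n ℂ) → (Y → Matrix n n ℂ) → ℝ) (x : X)
    (hmono : ∀ ρ ρ' : X → Matrix n n ℂ, ∀ σ σ' : Y → Matrix n n ℂ,
      Continuous ρ → Continuous ρ' → Continuous σ → Continuous σ' →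
      (∀ x', (ρ x').PosDef) → (∀ x', (ρ' x').PosDef) →
      (∀ y, (σ y).PosDef) → (∀ y, (σ' y).PosDef) →
      (∃ T : Matrix n n ℂ →ₗ[ℂ] Matrix n n ℂ, IsCP T ∧ IsTNI T ∧
        (∀ x', loewner (ρ' x') (T (ρ x'))) ∧ (∀ y, loewner (T (σ y)) (σ' y))) →
      f ρ' σ' ≤ f ρ σ)
    (hscale : ∀ c : X → ℝ, Continuous c → (∀ x', 0 < c x') → c x = 1 →
      ∀ ρ : X → Matrix n n ℂ, ∀ σ : Y → Matrix n n ℂ,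
      Continuous ρ → Continuous σ → (∀ x', (ρ x').PosDef) → (∀ y, (σ y).PosDef) →
      f (fun x' => (c x' : ℂ) • ρ x') σ = f ρ σ)
    (ρ ρ' : X → Matrix n n ℂ) (σ : Y → Matrix n n ℂ)
    (hρc : Continuous ρ) (hρ'c : Continuous ρ') (hσc : Continuous σ)
    (hρ : ∀ x', (ρ x').PosDef) (hρ' : ∀ x', (ρ' x').PosDef) (hσ : ∀ y, (σ y).PosDef)
    (hpt : ρ x = ρ' x) :
    f ρ σ = f ρ' σ := by
  have mono : ∀ ρ₁ ρ₂ : X → Matrix n n ℂ, Continuous ρ₁ → Continuous ρ₂ →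
      (∀ x', (ρ₁ x').PosDef) → (∀ x', (ρ₂ x').PosDef) → (∀ x', loewner (ρ₂ x') (ρ₁ x')) →
      f ρ₂ σ ≤ f ρ₁ σ := fun ρ₁ ρ₂ h₁c h₂c h₁ h₂ hle =>
    hmono ρ₁ ρ₂ σ σ h₁c h₂c hσc hσc h₁ h₂ hσ hσ
      ⟨LinearMap.id, isCP_id, isTNI_id, hle, fun y => loewner_refl (σ y)⟩
  have key : ∀ ρ₁ ρ₂ : X → Matrix n n ℂ, Continuous ρ₁ → Continuous ρ₂ →
      (∀ x', (ρ₁ x').PosDef) → (∀ x', (ρ₂ x').PosDef) → ρ₁ x = ρ₂ x → f ρ₂ σ ≤ f ρ₁ σ := by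
    intro ρ₁ ρ₂ h₁c h₂c h₁ h₂ hpt
    obtain ⟨c, hc, hcpos, hcx, hle⟩ := exists_continuous_scale_loewner h₁c h₂c h₁ h₂ hpt
    calc f ρ₂ σ ≤ f (fun x' => (c x' : ℂ) • ρ₁ x') σ :=
          mono _ ρ₂ ((Complex.continuous_ofReal.comp hc).smul h₁c) h₂c
            (fun x' => (h₁ x').smul (Complex.zero_lt_real.mpr (hcpos x'))) h₂ hle
      _ = f ρ₁ σ := hscale c hc hcpos hcx ρ₁ σ h₁c hσc h₁ hσ
  exact le_antisymm (key ρ' ρ hρ'c hρc hρ' hρ hpt.symm) (key ρ ρ' hρc hρ'c hρ hρ' hpt)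

/-- **Single-point dependence of spectrum elements.**
Let `f` be a function of pairs of continuous families of positive definite matrices over
compact Hausdorff `X, Y` that is monotone under relative submajorization and invariant
under multiplying the first family by a positive continuous scalar function `c` with
`c(x) = 1` (as holds for the elements of the spectrum restricted to classical pairs).
Then `f(ρ,σ)` depends on `ρ` only through the single value `ρ(x)`: whenever
`ρ(x) = ρ'(x)`, one has `f(ρ,σ) = f(ρ',σ)`. -/
theorem spectrum_element_single_point_dependence
    {X Y : Type*} [TopologicalSpace X] [TopologicalSpace Y]
    [CompactSpace X] [CompactSpace Y] [Nonempty X] [Nonempty Y] [T2Space X] [T2Space Y]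
    [Fintype n] [DecidableEq n]
    (f : (X → Matrix n n ℂ) → (Y → Matrix n n ℂ) → ℝ) (x : X)
    (hmono : ∀ ρ ρ' : X → Matrix n n ℂ, ∀ σ σ' : Y → Matrix n n ℂ,
      Continuous ρ → Continuous ρ' → Continuous σ → Continuous σ' →
      (∀ x', (ρ x').PosDef) → (∀ x', (ρ' x').PosDef) →
      (∀ y, (σ y).PosDef) → (∀ y, (σ' y).PosDef) →
      (∃ T : Matrix n n ℂ →ₗ[ℂ] Matrix n n ℂ, IsCP T ∧ IsTNI T ∧
        (∀ x', loewner (ρ' x') (T (ρ x'))) ∧ (∀ y, loewner (T (σ y)) (σ' y))) →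
      f ρ' σ' ≤ f ρ σ)
    (hscale : ∀ c : X → ℝ, Continuous c → (∀ x', 0 < c x') → c x = 1 →
      ∀ ρ : X → Matrix n n ℂ, ∀ σ : Y → Matrix n n ℂ,
      Continuous ρ → Continuous σ → (∀ x', (ρ x').PosDef) → (∀ y, (σ y).PosDef) →
      f (fun x' => (c x' : ℂ) • ρ x') σ = f ρ σ)
    (ρ ρ' : X → Matrix n n ℂ) (σ : Y → Matrix n n ℂ)
    (hρc : Continuous ρ) (hρ'c : Continuous ρ') (hσc : Continuous σ)
    (hρ : ∀ x', (ρ x').PosDef) (hρ' : ∀ x', (ρ' x').PosDef) (hσ : ∀ y, (σ y).PosDef)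
    (hpt : ρ x = ρ' x) :
    f ρ σ = f ρ' σ :=
  spectrum_element_single_point_dependence_general f x hmono hscale ρ ρ' σ hρc hρ'c hσc hρ hρ' hσ
    hpt
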